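/- arXiv:1806.03195 — 4 statements merged into one kernel-verified Lean document; each statement's English description precedes it below -/
import Mathlib

section
/- Let τ ∈ (0,1] and let g : ℝ^d → {0,1} be a classifier with a(g) > 0 and b(g) > 0. Then DI(g,X,S) ≤ τ if and only if BER(g,X,S) ≤ 1/2 − (a(g)/2)·(1/τ − 1). -/
open MeasureTheory ProbabilityTheory ENNReal

/-! With `b = P(g = 1 | S = 1)` we have `P(g = 0 | S = 1) = 1 - b`, so `BER = (1 - b + a) / 2`, and the
BER bound rearranges to `a / τ ≤ b`, which is `a / b ≤ τ` after clearing the positive denominators. -/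

lemma probReal_eq_false_eq_one_sub {Ω : Type*} [MeasurableSpace Ω] (μ : Measure Ω)
    [IsProbabilityMeasure μ] {f : Ω → Bool} (hf : Measurable f) :
    μ.real {ω | f ω = false} = 1 - μ.real {ω | f ω = true} := by
  have hcompl : {ω | f ω = false} = {ω | f ω = true}ᶜ := by
    ext ω
    simp
  rw [hcompl]
  exact probReal_compl_eq_one_sub (hf (measurableSet_singleton true))

lemma div_le_iff_half_one_sub_add_le {a b τ : ℝ} (hb : 0 < b) (hτ : 0 < τ) :
    a / b ≤ τ ↔ (1 - b + a) / 2 ≤ 1 / 2 - (a / 2) * (1 / τ - 1) := by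
  calc a / b ≤ τ ↔ a / τ ≤ b := by rw [div_le_iff₀ hb, div_le_iff₀ hτ, mul_comm]
    _ ↔ (1 - b + a) / 2 ≤ 1 / 2 - (a / 2) * (1 / τ - 1) := by
      have hgap : 1 / 2 - (a / 2) * (1 / τ - 1) - (1 - b + a) / 2 = (b - a / τ) / 2 := by ring
      constructor <;> intro h <;> linarith

theorem disparateImpact_iff_BER_le_general
    {Ω : Type*} [MeasurableSpace Ω] (P : Measure Ω) [IsProbabilityMeasure P]
    {d : ℕ}
    (X : Ω → EuclideanSpace ℝ (Fin d)) (S : Ω → Bool)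
    (hX : Measurable X)
    (hS1 : P {ω | S ω = true} ≠ 0)
    (g : EuclideanSpace ℝ (Fin d) → Bool) (hg : Measurable g)
    (τ : ℝ) (hτ : τ ∈ Set.Ioc (0 : ℝ) 1)
    (a b BER : ℝ)
    (ha : a = (P[|{ω | S ω = false}] {ω | g (X ω) = true}).toReal)
    (hb : b = (P[|{ω | S ω = true}] {ω | g (X ω) = true}).toReal)
    (hBER : BER = ((P[|{ω | S ω = true}] {ω | g (X ω) = false}).toReal
      + (P[|{ω | S ω = false}] {ω | g (X ω) = true}).toReal) / 2)
    (hbpos : 0 < b) :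
    a / b ≤ τ ↔ BER ≤ 1 / 2 - (a / 2) * (1 / τ - 1) := by
  have : IsProbabilityMeasure P[|{ω | S ω = true}] := cond_isProbabilityMeasure hS1
  have hBER' : BER = (1 - b + a) / 2 := by
    rw [hBER, ← ha, hb, ← measureReal_def, ← measureReal_def,
      probReal_eq_false_eq_one_sub (f := fun ω ↦ g (X ω)) _ (hg.comp hX)]
  rw [hBER']
  exact div_le_iff_half_one_sub_add_le hbpos hτ.1

/-- **Disparate Impact ⇔ Balanced Error Rate bound.**
Let `τ ∈ (0,1]` and `g : ℝ^d → {0,1}` a classifier with `a(g) > 0` and `b(g) > 0`.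
Then `DI(g,X,S) ≤ τ` iff `BER(g,X,S) ≤ 1/2 − (a(g)/2)(1/τ − 1)`. -/
theorem disparateImpact_iff_BER_le
    {Ω : Type*} [MeasurableSpace Ω] (P : Measure Ω) [IsProbabilityMeasure P]
    {d : ℕ} (hd : 1 ≤ d)
    (X : Ω → EuclideanSpace ℝ (Fin d)) (S : Ω → Bool)
    (hX : Measurable X) (hS : Measurable S)
    (hS0 : P {ω | S ω = false} ≠ 0) (hS1 : P {ω | S ω = true} ≠ 0)
    (g : EuclideanSpace ℝ (Fin d) → Bool) (hg : Measurable g)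
    (τ : ℝ) (hτ : τ ∈ Set.Ioc (0 : ℝ) 1)
    (a b BER : ℝ)
    (ha : a = (P[|{ω | S ω = false}] {ω | g (X ω) = true}).toReal)
    (hb : b = (P[|{ω | S ω = true}] {ω | g (X ω) = true}).toReal)
    (hBER : BER = ((P[|{ω | S ω = true}] {ω | g (X ω) = false}).toReal
      + (P[|{ω | S ω = false}] {ω | g (X ω) = true}).toReal) / 2)
    (hapos : 0 < a) (hbpos : 0 < b) :
    a / b ≤ τ ↔ BER ≤ 1 / 2 - (a / 2) * (1 / τ - 1) :=
  disparateImpact_iff_BER_le_general P X S hX hS1 g hg τ hτ a b BER ha hb hBER hbpos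
end

section
/- Let T_0, T_1 : ℝ^d → ℝ^d be Borel maps and write T_S(X) for the random vector equal to T_s(X) on the event {S=s}. Then the excess risk of the Bayes classifier applied to the transported data satisfies P(g_B(T_S(X), S) ≠ Y) − P(g_B(X,S) ≠ Y) ≤ 2 · E[ |η_S(X) − η_S(T_S(X))| ]. -/
/-! On `{S = s}` the regression identity says that `P(Y = 1, X ∈ A, S = s)` is the integral of
`η_s(X)` over `{X ∈ A, S = s}`; summing over `s` gives the same for every event determined by
`(X, S)`. Hence any classifier that predicts `1` exactly on such an event `F` errs with probability
`E[1_F (1 - η_S(X)) + 1_{Fᶜ} η_S(X)]`. Both classifiers threshold a regression value at `1/2`,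
the Bayes one `η_S(X)` and the transported one `η_S(T_S(X))`. Where they disagree these two values
lie on opposite sides of `1/2`, so the pointwise loss gap `|1 - 2 η_S(X)|` is at most
`2 |η_S(X) - η_S(T_S(X))|`. -/

open MeasureTheory ProbabilityTheory ENNReal

open scoped symmDiff

theorem ite_half_lt_sub_ite_half_lt_le (p t : ℝ) :
    (if 1 / 2 < t then 1 - p else p) - (if 1 / 2 < p then 1 - p else p) ≤ 2 * |p - t| := by
  have := le_abs_self (p - t)
  have := neg_abs_le (p - t)
  split_ifs <;> linarith

section

variable {Ω : Type*} [MeasurableSpace Ω] {μ : Measure Ω} [IsFiniteMeasure μ]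

theorem measureReal_mul_setIntegral_cond (f : Ω → ℝ) (s : Set Ω) {t : Set Ω}
    (ht : MeasurableSet t) :
    μ.real s * ∫ ω in t, f ω ∂μ[|s] = ∫ ω in t ∩ s, f ω ∂μ := by
  by_cases hs : μ s = 0
  · have hts : μ (t ∩ s) = 0 := measure_mono_null Set.inter_subset_right hs
    simp [measureReal_def, hs, Measure.restrict_eq_zero.mpr hts]
  · rw [ProbabilityTheory.cond, Measure.restrict_smul, integral_smul_measure,
      Measure.restrict_restrict ht, smul_eq_mul, ← mul_assoc, toReal_inv, measureReal_def,
      mul_inv_cancel₀ (toReal_ne_zero.mpr ⟨hs, measure_ne_top μ s⟩), one_mul]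

theorem measureReal_mul_setIntegral_map_cond {E : Type*} [MeasurableSpace E] {X : Ω → E}
    (hX : Measurable X) {f : E → ℝ} (hf : Measurable f) {A : Set E} (hA : MeasurableSet A)
    (s : Set Ω) :
    μ.real s * ∫ x in A, f x ∂(μ[|s]).map X = ∫ ω in X ⁻¹' A ∩ s, f (X ω) ∂μ := by
  rw [setIntegral_map hA hf.aestronglyMeasurable hX.aemeasurable]
  exact measureReal_mul_setIntegral_cond _ s (hX hA)

open Classical in
theorem measureReal_symmDiff_eq_integral_piecewise {F G : Set Ω} (hF : MeasurableSet F)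
    (hG : MeasurableSet G) {h : Ω → ℝ} (hh : Integrable h μ)
    (hGF : μ.real (G ∩ F) = ∫ ω in F, h ω ∂μ) (hGFc : μ.real (G ∩ Fᶜ) = ∫ ω in Fᶜ, h ω ∂μ) :
    μ.real (F ∆ G) = ∫ ω, F.piecewise (fun ω ↦ 1 - h ω) h ω ∂μ := by
  have hFG : μ.real (F \ G) = μ.real F - μ.real (G ∩ F) := by
    rw [← measureReal_inter_add_sdiff hG (s := F), Set.inter_comm]; ring
  rw [measureReal_symmDiff_eq hF hG, hFG, Set.sdiff_eq, hGF, hGFc,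
    integral_piecewise hF (f := fun ω ↦ 1 - h ω) ((integrable_const 1).sub hh).integrableOn
      hh.integrableOn,
    integral_sub (integrable_const 1).integrableOn hh.integrableOn, setIntegral_const,
    smul_eq_mul, mul_one]

open Classical in
theorem integral_piecewise_half_lt_sub_le {p t : Ω → ℝ} (hp : Measurable p) (ht : Measurable t)
    (hpi : Integrable p μ) (hti : Integrable t μ) :
    ∫ ω, {ω | 1 / 2 < t ω}.piecewise (fun ω ↦ 1 - p ω) p ω ∂μ
        - ∫ ω, {ω | 1 / 2 < p ω}.piecewise (fun ω ↦ 1 - p ω) p ω ∂μ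
      ≤ 2 * ∫ ω, |p ω - t ω| ∂μ := by
  have hint : ∀ {F : Set Ω}, MeasurableSet F →
      Integrable (F.piecewise (fun ω ↦ 1 - p ω) p) μ := fun hF ↦
    .piecewise hF ((integrable_const 1).sub hpi).integrableOn hpi.integrableOn
  have htF := hint (measurableSet_lt (measurable_const (a := 1 / 2)) ht)
  have hpF := hint (measurableSet_lt (measurable_const (a := 1 / 2)) hp)
  rw [← integral_sub htF hpF, ← integral_const_mul]
  refine integral_mono (htF.sub hpF) ((hpi.sub hti).abs.const_mul 2) fun ω ↦ ?_
  simpa only [Pi.sub_apply, Set.piecewise, Set.mem_ofPred_eq] using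
    ite_half_lt_sub_ite_half_lt_le (p ω) (t ω)

end

section

variable {Ω E ι : Type*} [MeasurableSpace Ω] [MeasurableSpace E] [MeasurableSpace ι]
  [MeasurableSingletonClass ι] {μ : Measure Ω} [IsFiniteMeasure μ]
  {X : Ω → E} {S : Ω → ι} {η : ι → E → ℝ}

theorem measurable_apply_snd_comp [Countable ι] (hη : ∀ s, Measurable (η s)) {W : E × ι → E}
    (hW : Measurable W) : Measurable fun z : E × ι ↦ η z.2 (W z) :=
  measurable_from_prod_countable_left fun s ↦ (hη s).comp (hW.comp measurable_prodMk_right)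

theorem measureReal_inter_preimage_eq_setIntegral [Fintype ι] {G : Set Ω} (hG : MeasurableSet G)
    (hX : Measurable X) (hS : Measurable S) (hη : Integrable (fun ω ↦ η (S ω) (X ω)) μ)
    (hfiber : ∀ s A, MeasurableSet A →
      μ.real (G ∩ {ω | X ω ∈ A ∧ S ω = s}) = ∫ ω in {ω | X ω ∈ A ∧ S ω = s}, η s (X ω) ∂μ)
    {B : Set (E × ι)} (hB : MeasurableSet B) :
    μ.real (G ∩ (fun ω ↦ (X ω, S ω)) ⁻¹' B)
      = ∫ ω in (fun ω ↦ (X ω, S ω)) ⁻¹' B, η (S ω) (X ω) ∂μ := by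
  set C : ι → Set Ω := fun s ↦ {ω | X ω ∈ {x | (x, s) ∈ B} ∧ S ω = s}
  have hC : ∀ s, MeasurableSet (C s) := fun s ↦
    (hX (measurable_prodMk_right hB)).inter (hS (measurableSet_singleton s))
  have hCdisj : Pairwise (Function.onFun Disjoint C) := fun s s' hss' ↦
    Set.disjoint_left.mpr fun ω hs hs' ↦ hss' (hs.2.symm.trans hs'.2)
  have hBC : (fun ω ↦ (X ω, S ω)) ⁻¹' B = ⋃ s, C s := by
    ext ω
    simp only [Set.mem_preimage, Set.mem_iUnion, Set.mem_ofPred_eq, C]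
    exact ⟨fun h ↦ ⟨S ω, h, rfl⟩, fun ⟨s, h, hs⟩ ↦ hs ▸ h⟩
  rw [hBC, Set.inter_iUnion, measureReal_iUnion_fintype
      (fun s s' hss' ↦ (hCdisj hss').mono Set.inter_subset_right Set.inter_subset_right)
      (fun s ↦ hG.inter (hC s)),
    integral_iUnion_fintype hC hCdisj fun s ↦ hη.integrableOn]
  refine Finset.sum_congr rfl fun s _ ↦ (hfiber s _ (measurable_prodMk_right hB)).trans ?_
  exact setIntegral_congr_fun (hC s) fun ω hω ↦ by rw [hω.2]

open Classical in
theorem measureReal_plugIn_ne_eq_integral_piecewise [Countable ι] {Y : Ω → Bool}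
    (hX : Measurable X) (hS : Measurable S) (hY : Measurable Y) (hη : ∀ s, Measurable (η s))
    (hint : Integrable (fun ω ↦ η (S ω) (X ω)) μ)
    (hreg : ∀ B, MeasurableSet B → μ.real ({ω | Y ω = true} ∩ (fun ω ↦ (X ω, S ω)) ⁻¹' B)
      = ∫ ω in (fun ω ↦ (X ω, S ω)) ⁻¹' B, η (S ω) (X ω) ∂μ)
    {g : E × ι → Bool} (hg : ∀ x s, g (x, s) = true ↔ 1 / 2 < η s x)
    {W : E × ι → E} (hW : Measurable W) :
    μ.real {ω | g (W (X ω, S ω), S ω) ≠ Y ω}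
      = ∫ ω, {ω | 1 / 2 < η (S ω) (W (X ω, S ω))}.piecewise (fun ω ↦ 1 - η (S ω) (X ω))
          (fun ω ↦ η (S ω) (X ω)) ω ∂μ := by
  have hB : MeasurableSet {z : E × ι | 1 / 2 < η z.2 (W z)} :=
    measurableSet_lt measurable_const (measurable_apply_snd_comp hη hW)
  have hmis : {ω | g (W (X ω, S ω), S ω) ≠ Y ω}
      = ((fun ω ↦ (X ω, S ω)) ⁻¹' {z | 1 / 2 < η z.2 (W z)}) ∆ {ω | Y ω = true} := by
    ext ω
    cases hy : Y ω <;> simp [Set.mem_symmDiff, hy, hg]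
  rw [hmis]
  exact measureReal_symmDiff_eq_integral_piecewise ((hX.prodMk hS) hB)
    (hY (measurableSet_singleton true)) hint (hreg _ hB) (hreg _ hB.compl)

end

theorem excess_risk_le_regression_gap_general
    {Ω : Type*} [MeasurableSpace Ω] (P : Measure Ω) [IsProbabilityMeasure P]
    {d : ℕ}
    (X : Ω → EuclideanSpace ℝ (Fin d)) (S Y : Ω → Bool)
    (hX : Measurable X) (hS : Measurable S) (hY : Measurable Y)
    (η : Bool → EuclideanSpace ℝ (Fin d) → ℝ)
    (hηmeas : ∀ s, Measurable (η s))
    (hη01 : ∀ s x, η s x ∈ Set.Icc (0 : ℝ) 1)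
    (hreg : ∀ (s : Bool) (A : Set (EuclideanSpace ℝ (Fin d))), MeasurableSet A →
      (P {ω | Y ω = true ∧ X ω ∈ A ∧ S ω = s}).toReal
        = (P {ω | S ω = s}).toReal * ∫ x in A, η s x ∂((P[|{ω | S ω = s}]).map X))
    (T : Bool → EuclideanSpace ℝ (Fin d) → EuclideanSpace ℝ (Fin d))
    (hT : ∀ s, Measurable (T s))
    (gB : EuclideanSpace ℝ (Fin d) × Bool → Bool)
    (hgB : ∀ x s, gB (x, s) = true ↔ 1 / 2 < η s x) :
    (P {ω | gB (T (S ω) (X ω), S ω) ≠ Y ω}).toReal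
        - (P {ω | gB (X ω, S ω) ≠ Y ω}).toReal
      ≤ 2 * ∫ ω, |η (S ω) (X ω) - η (S ω) (T (S ω) (X ω))| ∂P := by
  have hTZ : Measurable fun z : EuclideanSpace ℝ (Fin d) × Bool ↦ T z.2 z.1 :=
    measurable_from_prod_countable_left hT
  have hmeas : ∀ W, Measurable W → Measurable fun ω ↦ η (S ω) (W (X ω, S ω)) := fun W hW ↦
    (measurable_apply_snd_comp hηmeas hW).comp (hX.prodMk hS)
  have hint : ∀ W, Measurable W → Integrable (fun ω ↦ η (S ω) (W (X ω, S ω))) P := fun W hW ↦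
    .of_mem_Icc 0 1 (hmeas W hW).aemeasurable (.of_forall fun ω ↦ hη01 _ _)
  have hregXS {B} (hB : MeasurableSet B) :=
    measureReal_inter_preimage_eq_setIntegral (hY (measurableSet_singleton true)) hX hS
      (hint _ measurable_fst)
      (fun s A hA ↦ (hreg s A hA).trans (measureReal_mul_setIntegral_map_cond hX (hηmeas s) hA _))
      hB
  have hrisk₁ : P.real {ω | gB (T (S ω) (X ω), S ω) ≠ Y ω} = _ :=
    measureReal_plugIn_ne_eq_integral_piecewise hX hS hY hηmeas (hint _ measurable_fst)
      (fun _ ↦ hregXS) hgB hTZ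
  have hrisk₀ : P.real {ω | gB (X ω, S ω) ≠ Y ω} = _ :=
    measureReal_plugIn_ne_eq_integral_piecewise hX hS hY hηmeas (hint _ measurable_fst)
      (fun _ ↦ hregXS) hgB measurable_fst
  exact (congrArg₂ (· - ·) hrisk₁ hrisk₀).trans_le <| integral_piecewise_half_lt_sub_le
    (hmeas _ measurable_fst) (hmeas _ hTZ) (hint _ measurable_fst) (hint _ hTZ)

/-- **Excess risk of the Bayes classifier on transported data.** For Borel maps
`T₀, T₁ : ℝ^d → ℝ^d`, writing `T_S(X)` for the random vector equal to `T_s(X)` on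
`{S=s}`, the Bayes rule `g_B(x,s) = 1_{η_s(x) > 1/2}` satisfies
`P(g_B(T_S(X),S) ≠ Y) − P(g_B(X,S) ≠ Y) ≤ 2 E[|η_S(X) − η_S(T_S(X))|]`. -/
theorem excess_risk_le_regression_gap
    {Ω : Type*} [MeasurableSpace Ω] (P : Measure Ω) [IsProbabilityMeasure P]
    {d : ℕ} (hd : 1 ≤ d)
    (X : Ω → EuclideanSpace ℝ (Fin d)) (S Y : Ω → Bool)
    (hX : Measurable X) (hS : Measurable S) (hY : Measurable Y)
    (hS0 : P {ω | S ω = false} ≠ 0) (hS1 : P {ω | S ω = true} ≠ 0)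
    (η : Bool → EuclideanSpace ℝ (Fin d) → ℝ)
    (hηmeas : ∀ s, Measurable (η s))
    (hη01 : ∀ s x, η s x ∈ Set.Icc (0 : ℝ) 1)
    (hreg : ∀ (s : Bool) (A : Set (EuclideanSpace ℝ (Fin d))), MeasurableSet A →
      (P {ω | Y ω = true ∧ X ω ∈ A ∧ S ω = s}).toReal
        = (P {ω | S ω = s}).toReal * ∫ x in A, η s x ∂((P[|{ω | S ω = s}]).map X))
    (T : Bool → EuclideanSpace ℝ (Fin d) → EuclideanSpace ℝ (Fin d))
    (hT : ∀ s, Measurable (T s))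
    (gB : EuclideanSpace ℝ (Fin d) × Bool → Bool) (hgBmeas : Measurable gB)
    (hgB : ∀ x s, gB (x, s) = true ↔ 1 / 2 < η s x) :
    (P {ω | gB (T (S ω) (X ω), S ω) ≠ Y ω}).toReal
        - (P {ω | gB (X ω, S ω) ≠ Y ω}).toReal
      ≤ 2 * ∫ ω, |η (S ω) (X ω) - η (S ω) (T (S ω) (X ω))| ∂P :=
  excess_risk_le_regression_gap_general P X S Y hX hS hY η hηmeas hη01 hreg T hT gB hgB
end

section
/- Let μ_0, μ_1 be Borel probability measures on ℝ^d with finite second moments and let T : ℝ^d → ℝ^d be a Borel map with T_♯ μ_0 = μ_1 and ∫ ‖x − T(x)‖² dμ_0(x) = W₂²(μ_0, μ_1). For λ ∈ [0,1] set μ_λ := ((1−λ)·Id + λ·T)_♯ μ_0. Then: (i) the map (1−λ)·Id + λ·T is an optimal transport map from μ_0 to μ_λ, i.e. ∫ ‖x − ((1−λ)x + λT(x))‖² dμ_0(x) = W₂²(μ_0, μ_λ); (ii) μ_λ is the weighted Wasserstein barycenter of μ_0 and μ_1 with weights 1−λ and λ, i.e. for every Borel probability measure ν on ℝ^d with finite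 second moment, (1−λ)·W₂²(μ_λ, μ_0) + λ·W₂²(μ_λ, μ_1) ≤ (1−λ)·W₂²(ν, μ_0) + λ·W₂²(ν, μ_1), with minimal value λ(1−λ)·W₂²(μ_0, μ_1). -/
/-!
Let `W` be the (non-squared) distance `W₂`, the infimum over couplings `π` of the `L²(π)` norm of
`x - y`. Gluing two couplings along their common marginal (by disintegration) turns Minkowski's
inequality into the triangle inequality for `W`. With `S = (1-λ)Id + λT`, the couplings
`(Id, S)♯μ₀` and `(S, T)♯μ₀` give `W(μ₀,μ_λ) ≤ λ W(μ₀,μ₁)` and `W(μ_λ,μ₁) ≤ (1-λ) W(μ₀,μ₁)`, so the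
triangle inequality through `μ_λ` forces equality in both. For any `ν`, the triangle inequality
through `ν` gives `W(ν,μ₀) + W(ν,μ₁) ≥ W(μ₀,μ₁)`, and `(1-λ)a² + λb² ≥ λ(1-λ)(a+b)²` for all `a, b`.
-/

open MeasureTheory ProbabilityTheory ENNReal

noncomputable def W2sq {d : ℕ} (μ ν : Measure (EuclideanSpace ℝ (Fin d))) : ℝ :=
  (⨅ π : {π : Measure (EuclideanSpace ℝ (Fin d) × EuclideanSpace ℝ (Fin d)) //
      π.map Prod.fst = μ ∧ π.map Prod.snd = ν},
    ∫⁻ p : EuclideanSpace ℝ (Fin d) × EuclideanSpace ℝ (Fin d),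
      (‖p.1 - p.2‖₊ : ℝ≥0∞) ^ 2 ∂(π.1)).toReal

namespace MeasureTheory

section LTwo

variable {α E : Type*} [MeasurableSpace α] [NormedAddCommGroup E] {μ : Measure α}

theorem eLpNorm_two_sq (f : α → E) :
    eLpNorm f 2 μ ^ 2 = ∫⁻ x, (‖f x‖₊ : ℝ≥0∞) ^ 2 ∂μ := by
  simpa [enorm_eq_nnnorm] using eLpNorm_nnreal_pow_eq_lintegral (f := f) (μ := μ) two_ne_zero

theorem memLp_two_iff_lintegral_nnnorm_sq_ne_top {f : α → E} (hf : AEStronglyMeasurable f μ) :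
    MemLp f 2 μ ↔ ∫⁻ x, (‖f x‖₊ : ℝ≥0∞) ^ 2 ∂μ ≠ ⊤ := by
  rw [← eLpNorm_two_sq]
  exact ⟨fun h => pow_ne_top h.eLpNorm_ne_top,
    fun h => ⟨hf, ((ENNReal.pow_ne_top_iff.1 h).resolve_right two_ne_zero).lt_top⟩⟩

theorem MemLp.integral_norm_sq_eq {f : α → E} (hf : MemLp f 2 μ) :
    ∫ x, ‖f x‖ ^ 2 ∂μ = (eLpNorm f 2 μ).toReal ^ 2 := by
  rw [← toReal_pow, eLpNorm_two_sq, integral_eq_lintegral_of_nonneg_ae (f := fun x => ‖f x‖ ^ 2)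
    (ae_of_all _ fun _ => by positivity) (hf.1.norm.pow 2)]
  simp only [ENNReal.ofReal_pow (norm_nonneg _), ofReal_norm, enorm_eq_nnnorm]

end LTwo

namespace Measure

variable {α β γ : Type*} [MeasurableSpace α] [MeasurableSpace β] [MeasurableSpace γ]

theorem isFiniteMeasure_of_map_fst {ρ : Measure (α × β)} {μ : Measure α} [IsFiniteMeasure μ]
    (h : ρ.map Prod.fst = μ) : IsFiniteMeasure ρ :=
  ⟨by rw [← fst_univ, Measure.fst, h]; exact measure_lt_top _ _⟩

/-- `Γ` is the law of `(x, y, z)` with `y` and `z` conditionally independent given `x`. -/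
theorem exists_gluing [StandardBorelSpace β] [Nonempty β] [StandardBorelSpace γ] [Nonempty γ]
    (π₁ : Measure (α × β)) (π₂ : Measure (α × γ)) [IsFiniteMeasure π₁] [IsFiniteMeasure π₂]
    (h : π₁.fst = π₂.fst) :
    ∃ Γ : Measure (α × β × γ),
      Γ.map (Prod.map id Prod.fst) = π₁ ∧ Γ.map (Prod.map id Prod.snd) = π₂ := by
  refine ⟨π₁.fst ⊗ₘ (π₁.condKernel ×ₖ π₂.condKernel), ?_, ?_⟩
  · rw [← compProd_map measurable_fst, ← Kernel.fst_eq, Kernel.fst_prod, disintegrate]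
  · rw [← compProd_map measurable_snd, ← Kernel.snd_eq, Kernel.snd_prod, h, disintegrate]

end Measure

end MeasureTheory

section Wasserstein

variable {E : Type*} [NormedAddCommGroup E] [MeasurableSpace E]

noncomputable def wasserstein (μ ν : Measure E) : ℝ≥0∞ :=
  ⨅ π : {π : Measure (E × E) // π.map Prod.fst = μ ∧ π.map Prod.snd = ν},
    eLpNorm (fun p => p.1 - p.2) 2 π.1

theorem wasserstein_le_eLpNorm {μ ν : Measure E} {π : Measure (E × E)}
    (h₁ : π.map Prod.fst = μ) (h₂ : π.map Prod.snd = ν) :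
    wasserstein μ ν ≤ eLpNorm (fun p => p.1 - p.2) 2 π :=
  iInf_le _ (⟨π, h₁, h₂⟩ : {π : Measure (E × E) // π.map Prod.fst = μ ∧ π.map Prod.snd = ν})

theorem wasserstein_ne_top {μ ν : Measure E} [IsProbabilityMeasure μ] [IsProbabilityMeasure ν]
    (hμ : MemLp id 2 μ) (hν : MemLp id 2 ν) : wasserstein μ ν ≠ ⊤ := by
  refine ne_top_of_le_ne_top (MemLp.eLpNorm_ne_top ?_)
    (wasserstein_le_eLpNorm (π := μ.prod ν) Measure.fst_prod Measure.snd_prod)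
  exact (hμ.comp_measurePreserving measurePreserving_fst).sub
    (hν.comp_measurePreserving measurePreserving_snd)

variable [BorelSpace E] [SecondCountableTopology E]

theorem wasserstein_map_le {α : Type*} [MeasurableSpace α] (μ : Measure α) {S R : α → E}
    (hS : Measurable S) (hR : Measurable R) :
    wasserstein (μ.map S) (μ.map R) ≤ eLpNorm (fun x => S x - R x) 2 μ := by
  have hSR : Measurable fun x => (S x, R x) := hS.prodMk hR
  calc wasserstein (μ.map S) (μ.map R)
      ≤ eLpNorm (fun p => p.1 - p.2) 2 (μ.map fun x => (S x, R x)) :=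
        wasserstein_le_eLpNorm (by rw [Measure.map_map measurable_fst hSR]; rfl)
          (by rw [Measure.map_map measurable_snd hSR]; rfl)
    _ = eLpNorm (fun x => S x - R x) 2 μ :=
        eLpNorm_map_measure (continuous_fst.sub continuous_snd).aestronglyMeasurable
          hSR.aemeasurable

theorem wasserstein_map_eq_eLpNorm_of_integral_eq {μ : Measure E} {T : E → E}
    (hT : Measurable T) (hmT : MemLp (fun x => x - T x) 2 μ)
    (h : ∫ x, ‖x - T x‖ ^ 2 ∂μ = (wasserstein μ (μ.map T)).toReal ^ 2) :
    wasserstein μ (μ.map T) = eLpNorm (fun x => x - T x) 2 μ := by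
  have hle : wasserstein μ (μ.map T) ≤ eLpNorm (fun x => x - T x) 2 μ := by
    simpa using wasserstein_map_le μ measurable_id hT
  refine (toReal_eq_toReal_iff' (ne_top_of_le_ne_top hmT.eLpNorm_ne_top hle)
    hmT.eLpNorm_ne_top).1 ?_
  rw [hmT.integral_norm_sq_eq] at h
  exact ((pow_left_inj₀ toReal_nonneg toReal_nonneg two_ne_zero).1 h).symm

theorem wasserstein_comm (μ ν : Measure E) : wasserstein μ ν = wasserstein ν μ := by
  suffices ∀ μ ν : Measure E, wasserstein ν μ ≤ wasserstein μ ν from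
    le_antisymm (this ν μ) (this μ ν)
  refine fun μ ν => le_iInf fun ⟨π, h₁, h₂⟩ => ?_
  calc wasserstein ν μ = wasserstein (π.map Prod.snd) (π.map Prod.fst) := by rw [h₁, h₂]
    _ ≤ eLpNorm (fun p => p.2 - p.1) 2 π := wasserstein_map_le π measurable_snd measurable_fst
    _ = eLpNorm (fun p => p.1 - p.2) 2 π := by
        rw [← eLpNorm_neg]; simp only [Pi.neg_def, neg_sub]

theorem wasserstein_triangle [CompleteSpace E] (μ ν ρ : Measure E) [IsFiniteMeasure ν] :
    wasserstein μ ρ ≤ wasserstein μ ν + wasserstein ν ρ := by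
  rw [wasserstein_comm μ ν]
  refine ENNReal.le_iInf_add_iInf fun ⟨π₁, hπ₁, hπ₁'⟩ ⟨π₂, hπ₂, hπ₂'⟩ => ?_
  have := Measure.isFiniteMeasure_of_map_fst hπ₁
  have := Measure.isFiniteMeasure_of_map_fst hπ₂
  obtain ⟨Γ, hΓ₁, hΓ₂⟩ := Measure.exists_gluing π₁ π₂ (hπ₁.trans hπ₂.symm)
  have hΓμ : Γ.map (fun p => p.2.1) = μ := by
    rw [← hπ₁', ← hΓ₁, Measure.map_map measurable_snd (measurable_id.prodMap measurable_fst)]; rfl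
  have hΓρ : Γ.map (fun p => p.2.2) = ρ := by
    rw [← hπ₂', ← hΓ₂, Measure.map_map measurable_snd (measurable_id.prodMap measurable_snd)]; rfl
  calc wasserstein μ ρ = wasserstein (Γ.map fun p => p.2.1) (Γ.map fun p => p.2.2) := by
        rw [hΓμ, hΓρ]
    _ ≤ eLpNorm (fun p => p.2.1 - p.2.2) 2 Γ := wasserstein_map_le Γ (by fun_prop) (by fun_prop)
    _ ≤ eLpNorm (fun p => p.1 - p.2.1) 2 Γ + eLpNorm (fun p => p.1 - p.2.2) 2 Γ := by
        rw [add_comm]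
        convert eLpNorm_sub_le (μ := Γ) (f := fun p => p.1 - p.2.2) (g := fun p => p.1 - p.2.1) (p := 2)
          (by fun_prop) (by fun_prop) one_le_two using 3
        exact (sub_sub_sub_cancel_left _ _ _).symm
    _ = eLpNorm (fun p => p.1 - p.2) 2 π₁ + eLpNorm (fun p => p.1 - p.2) 2 π₂ := by
        rw [← hΓ₁, ← hΓ₂, eLpNorm_map_measure (by fun_prop) (by fun_prop),
          eLpNorm_map_measure (by fun_prop) (by fun_prop)]
        rfl

theorem wasserstein_interpolant_eq_mul [NormedSpace ℝ E] [CompleteSpace E] {μ₀ : Measure E}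
    [IsProbabilityMeasure μ₀] {T : E → E} (hT : Measurable T)
    (hfin : eLpNorm (fun x => x - T x) 2 μ₀ ≠ ⊤)
    (hopt : wasserstein μ₀ (μ₀.map T) = eLpNorm (fun x => x - T x) 2 μ₀)
    {t : ℝ} (ht₀ : 0 ≤ t) (ht₁ : t ≤ 1) :
    (wasserstein μ₀ (μ₀.map fun x => (1 - t) • x + t • T x)).toReal
        = t * (wasserstein μ₀ (μ₀.map T)).toReal ∧
      (wasserstein (μ₀.map fun x => (1 - t) • x + t • T x) (μ₀.map T)).toReal
        = (1 - t) * (wasserstein μ₀ (μ₀.map T)).toReal := by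
  set S : E → E := fun x => (1 - t) • x + t • T x
  set C := eLpNorm (fun x => x - T x) 2 μ₀
  have hS : Measurable S := by fun_prop
  have : IsProbabilityMeasure (μ₀.map S) := Measure.isProbabilityMeasure_map hS.aemeasurable
  have h₀ : wasserstein μ₀ (μ₀.map S) ≤ ‖t‖ₑ * C :=
    calc wasserstein μ₀ (μ₀.map S) = wasserstein (μ₀.map id) (μ₀.map S) := by rw [Measure.map_id]
      _ ≤ eLpNorm (fun x => id x - S x) 2 μ₀ := wasserstein_map_le μ₀ measurable_id hS
      _ = eLpNorm (t • fun x => x - T x) 2 μ₀ := by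
          congr 1; ext x; simp only [S, id, Pi.smul_apply]; module
      _ = ‖t‖ₑ * C := eLpNorm_const_smul _ _ _ _
  have h₁ : wasserstein (μ₀.map S) (μ₀.map T) ≤ ‖1 - t‖ₑ * C :=
    calc wasserstein (μ₀.map S) (μ₀.map T) ≤ eLpNorm (fun x => S x - T x) 2 μ₀ :=
          wasserstein_map_le μ₀ hS hT
      _ = eLpNorm ((1 - t) • fun x => x - T x) 2 μ₀ := by
          congr 1; ext x; simp only [S, Pi.smul_apply]; module
      _ = ‖1 - t‖ₑ * C := eLpNorm_const_smul _ _ _ _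
  have ha := toReal_mono (mul_ne_top enorm_ne_top hfin) h₀
  have hb := toReal_mono (mul_ne_top enorm_ne_top hfin) h₁
  have hc := toReal_le_add (wasserstein_triangle μ₀ (μ₀.map S) (μ₀.map T))
    (ne_top_of_le_ne_top (mul_ne_top enorm_ne_top hfin) h₀)
    (ne_top_of_le_ne_top (mul_ne_top enorm_ne_top hfin) h₁)
  rw [toReal_mul, toReal_enorm, Real.norm_of_nonneg ht₀] at ha
  rw [toReal_mul, toReal_enorm, Real.norm_of_nonneg (sub_nonneg.2 ht₁)] at hb
  rw [hopt] at hc ⊢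
  constructor <;> linarith

end Wasserstein

theorem W2sq_eq_toReal_wasserstein_sq {d : ℕ} (μ ν : Measure (EuclideanSpace ℝ (Fin d))) :
    W2sq μ ν = (wasserstein μ ν).toReal ^ 2 := by
  have h := (ENNReal.orderIsoRpow 2 two_pos).map_iInf
    fun π : {π : Measure (_ × _) // π.map Prod.fst = μ ∧ π.map Prod.snd = ν} =>
      eLpNorm (fun p => p.1 - p.2) 2 π.1
  simp only [ENNReal.orderIsoRpow_apply, ENNReal.rpow_two, eLpNorm_two_sq] at h
  rw [← toReal_pow, wasserstein, h, W2sq]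

theorem mul_one_sub_mul_sq_le_of_le_add {t a b c : ℝ} (ht₀ : 0 ≤ t) (ht₁ : t ≤ 1) (hc : 0 ≤ c)
    (habc : c ≤ a + b) : t * (1 - t) * c ^ 2 ≤ (1 - t) * a ^ 2 + t * b ^ 2 := by
  have hsq : c ^ 2 ≤ (a + b) ^ 2 := pow_le_pow_left₀ hc habc 2
  -- `(1-t)a² + tb² - t(1-t)(a+b)² = ((1-t)a - tb)²`
  nlinarith [sq_nonneg ((1 - t) * a - t * b),
    mul_le_mul_of_nonneg_left hsq (mul_nonneg ht₀ (sub_nonneg.2 ht₁))]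

theorem mccann_interpolant_is_barycenter_general
    {d : ℕ}
    (μ₀ μ₁ : Measure (EuclideanSpace ℝ (Fin d)))
    [IsProbabilityMeasure μ₀] [IsProbabilityMeasure μ₁]
    (hμ₀2 : ∫⁻ x, (‖x‖₊ : ℝ≥0∞) ^ 2 ∂μ₀ ≠ ⊤)
    (hμ₁2 : ∫⁻ x, (‖x‖₊ : ℝ≥0∞) ^ 2 ∂μ₁ ≠ ⊤)
    (T : EuclideanSpace ℝ (Fin d) → EuclideanSpace ℝ (Fin d)) (hT : Measurable T)
    (hpush : μ₀.map T = μ₁)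
    (hoptimal : ∫ x, ‖x - T x‖ ^ 2 ∂μ₀ = W2sq μ₀ μ₁)
    (lam : ℝ) (hlam : lam ∈ Set.Icc (0 : ℝ) 1)
    (μlam : Measure (EuclideanSpace ℝ (Fin d)))
    (hμlam : μlam = μ₀.map (fun x => (1 - lam) • x + lam • T x)) :
    (∫ x, ‖x - ((1 - lam) • x + lam • T x)‖ ^ 2 ∂μ₀ = W2sq μ₀ μlam)
      ∧ (∀ ν : Measure (EuclideanSpace ℝ (Fin d)), IsProbabilityMeasure ν →
          ∫⁻ x, (‖x‖₊ : ℝ≥0∞) ^ 2 ∂ν ≠ ⊤ →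
          (1 - lam) * W2sq μlam μ₀ + lam * W2sq μlam μ₁
            ≤ (1 - lam) * W2sq ν μ₀ + lam * W2sq ν μ₁)
      ∧ (1 - lam) * W2sq μlam μ₀ + lam * W2sq μlam μ₁
          = lam * (1 - lam) * W2sq μ₀ μ₁ := by
  obtain ⟨ht₀, ht₁⟩ := hlam
  subst hpush
  simp only [W2sq_eq_toReal_wasserstein_sq] at hoptimal ⊢
  have hmom : ∀ ν : Measure (EuclideanSpace ℝ (Fin d)), ∫⁻ x, (‖x‖₊ : ℝ≥0∞) ^ 2 ∂ν ≠ ⊤ →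
      MemLp id 2 ν := fun ν => (memLp_two_iff_lintegral_nnnorm_sq_ne_top aestronglyMeasurable_id).2
  have hmT : MemLp (fun x => x - T x) 2 μ₀ := (hmom μ₀ hμ₀2).sub
    ((memLp_map_measure_iff aestronglyMeasurable_id hT.aemeasurable).1 (hmom _ hμ₁2))
  obtain ⟨h₀, h₁⟩ := wasserstein_interpolant_eq_mul hT hmT.eLpNorm_ne_top
    (wasserstein_map_eq_eLpNorm_of_integral_eq hT hmT hoptimal) ht₀ ht₁
  rw [← hμlam] at h₀ h₁
  have hvalue : (1 - lam) * (wasserstein μlam μ₀).toReal ^ 2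
      + lam * (wasserstein μlam (μ₀.map T)).toReal ^ 2
      = lam * (1 - lam) * (wasserstein μ₀ (μ₀.map T)).toReal ^ 2 := by
    rw [wasserstein_comm, h₀, h₁]; ring
  refine ⟨?_, fun ν hν hν2 => ?_, hvalue⟩
  · calc ∫ x, ‖x - ((1 - lam) • x + lam • T x)‖ ^ 2 ∂μ₀ = ∫ x, lam ^ 2 * ‖x - T x‖ ^ 2 ∂μ₀ := by
          congr 1; ext x
          rw [show x - ((1 - lam) • x + lam • T x) = lam • (x - T x) by module, norm_smul,
            Real.norm_of_nonneg ht₀, mul_pow]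
      _ = _ := by rw [integral_const_mul, hoptimal, h₀]; ring
  · rw [hvalue, wasserstein_comm ν]
    refine mul_one_sub_mul_sq_le_of_le_add ht₀ ht₁ toReal_nonneg
      (toReal_le_add (wasserstein_triangle μ₀ ν (μ₀.map T)) ?_ ?_)
    · exact wasserstein_ne_top (hmom μ₀ hμ₀2) (hmom ν hν2)
    · exact wasserstein_ne_top (hmom ν hν2) (hmom _ hμ₁2)

/-- **The McCann interpolant is the weighted Wasserstein barycenter.** If `T` pushes
`μ₀` optimally to `μ₁` and `μ_λ = ((1−λ)Id + λT)♯ μ₀` for `λ ∈ [0,1]`, then: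
(i) `(1−λ)Id + λT` is an optimal transport map from `μ₀` to `μ_λ`;
(ii) `μ_λ` minimizes `ν ↦ (1−λ)W₂²(ν,μ₀) + λW₂²(ν,μ₁)` over probability measures `ν`
with finite second moment, with minimal value `λ(1−λ)W₂²(μ₀,μ₁)`. -/
theorem mccann_interpolant_is_barycenter
    {d : ℕ} (hd : 1 ≤ d)
    (μ₀ μ₁ : Measure (EuclideanSpace ℝ (Fin d)))
    [IsProbabilityMeasure μ₀] [IsProbabilityMeasure μ₁]
    (hμ₀2 : ∫⁻ x, (‖x‖₊ : ℝ≥0∞) ^ 2 ∂μ₀ ≠ ⊤)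
    (hμ₁2 : ∫⁻ x, (‖x‖₊ : ℝ≥0∞) ^ 2 ∂μ₁ ≠ ⊤)
    (T : EuclideanSpace ℝ (Fin d) → EuclideanSpace ℝ (Fin d)) (hT : Measurable T)
    (hpush : μ₀.map T = μ₁)
    (hoptimal : ∫ x, ‖x - T x‖ ^ 2 ∂μ₀ = W2sq μ₀ μ₁)
    (lam : ℝ) (hlam : lam ∈ Set.Icc (0 : ℝ) 1)
    (μlam : Measure (EuclideanSpace ℝ (Fin d)))
    (hμlam : μlam = μ₀.map (fun x => (1 - lam) • x + lam • T x)) :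
    (∫ x, ‖x - ((1 - lam) • x + lam • T x)‖ ^ 2 ∂μ₀ = W2sq μ₀ μlam)
      ∧ (∀ ν : Measure (EuclideanSpace ℝ (Fin d)), IsProbabilityMeasure ν →
          ∫⁻ x, (‖x‖₊ : ℝ≥0∞) ^ 2 ∂ν ≠ ⊤ →
          (1 - lam) * W2sq μlam μ₀ + lam * W2sq μlam μ₁
            ≤ (1 - lam) * W2sq ν μ₀ + lam * W2sq ν μ₁)
      ∧ (1 - lam) * W2sq μlam μ₀ + lam * W2sq μlam μ₁
          = lam * (1 - lam) * W2sq μ₀ μ₁ :=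
  mccann_interpolant_is_barycenter_general μ₀ μ₁ hμ₀2 hμ₁2 T hT hpush hoptimal lam hlam μlam hμlam
end

section
/- Fix K > 0 and λ ∈ [0,1]. Let μ_{0,λ} be the uniform distribution on the interval [K − λ(K + 1/2), K − λ(K + 1/2) + 1] (the geometric repair at level λ of the uniform distribution on [K, K+1] toward the midpoint barycenter uniform on [−1/2, 1/2]) and let μ_{1,λ} be the uniform distribution on [−(K+1) + λ(K + 1/2), −(K+1) + λ(K + 1/2) + 1] (the geometric repair at level λ of the uniform distribution on [−K−1, −K]). Then d_TV(μ_{0,λ}, μ_{1,λ}) = min(1, (1−λ)(2K+1)); in particular d_TV(μ_{0,λ}, μ_{1,λ}) = 1 whenever λ ≤ 2K/(2K+1). -/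
/-! Restricting one measure to two sets `s`, `t` of finite measure gives laws whose total variation
distance is `max (μ (s \ t)) (μ (t \ s))`: on any `A` the two masses differ by at most the mass of
`A` outside the other set, and `s \ t`, `t \ s` attain this. For translates of an interval of
length `ℓ` at distance `d` both differences have length `min ℓ d`, and the two repaired laws are
unit intervals at distance `(1 - λ)(2K + 1)`. -/

open MeasureTheory ProbabilityTheory ENNReal Set

noncomputable def dTV {E : Type*} [MeasurableSpace E] (μ ν : Measure E) : ℝ :=
  ⨆ A : {A : Set E // MeasurableSet A}, |(μ A.1).toReal - (ν A.1).toReal|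

theorem dTV_eq_of_forall_le_of_exists {E : Type*} [MeasurableSpace E] {μ ν : Measure E} {c : ℝ}
    (hle : ∀ A, MeasurableSet A → |μ.real A - ν.real A| ≤ c)
    (hex : ∃ A, MeasurableSet A ∧ c ≤ |μ.real A - ν.real A|) :
    dTV μ ν = c := by
  obtain ⟨A, hA, hcA⟩ := hex
  refine le_antisymm (ciSup_le fun A ↦ hle A.1 A.2) (hcA.trans ?_)
  exact le_ciSup (f := fun A : {A : Set E // MeasurableSet A} ↦ |μ.real A.1 - ν.real A.1|)
    ⟨c, by rintro _ ⟨B, rfl⟩; exact hle B.1 B.2⟩ ⟨A, hA⟩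

section Restrict

variable {α : Type*} [MeasurableSpace α] (μ : Measure α) {s t : Set α}

theorem measureReal_inter_sub_inter_le (A : Set α) (hs : μ s ≠ ∞) (ht : μ t ≠ ∞) :
    μ.real (A ∩ s) - μ.real (A ∩ t) ≤ μ.real (s \ t) := by
  have hsub : (A ∩ s) \ (A ∩ t) ⊆ s \ t := fun _ ⟨⟨hA, hs⟩, hnt⟩ ↦ ⟨hs, fun ht ↦ hnt ⟨hA, ht⟩⟩
  exact (le_measureReal_sdiff (measure_ne_top_of_subset inter_subset_right ht)).trans
    (measureReal_mono hsub (measure_ne_top_of_subset sdiff_subset hs))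

theorem dTV_restrict_restrict (hs : MeasurableSet s) (ht : MeasurableSet t)
    (hμs : μ s ≠ ∞) (hμt : μ t ≠ ∞) :
    dTV (μ.restrict s) (μ.restrict t) = max (μ.real (s \ t)) (μ.real (t \ s)) := by
  have restrict_sdiff {u v : Set α} (hu : MeasurableSet u) (hv : MeasurableSet v) :
      (μ.restrict u).real (u \ v) = μ.real (u \ v) ∧ (μ.restrict v).real (u \ v) = 0 := by
    rw [measureReal_restrict_apply (hu.diff hv), measureReal_restrict_apply (hu.diff hv),
      inter_eq_left.2 sdiff_subset, sdiff_inter_self, measureReal_empty]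
    exact ⟨rfl, rfl⟩
  apply dTV_eq_of_forall_le_of_exists
  · intro A hA
    rw [measureReal_restrict_apply hA, measureReal_restrict_apply hA, abs_sub_le_iff]
    exact ⟨(measureReal_inter_sub_inter_le μ A hμs hμt).trans (le_max_left _ _),
      (measureReal_inter_sub_inter_le μ A hμt hμs).trans (le_max_right _ _)⟩
  · obtain ⟨hst_s, hst_t⟩ := restrict_sdiff hs ht
    obtain ⟨hts_t, hts_s⟩ := restrict_sdiff ht hs
    rcases max_choice (μ.real (s \ t)) (μ.real (t \ s)) with h | h <;> rw [h]
    · exact ⟨s \ t, hs.diff ht, by rw [hst_s, hst_t, sub_zero]; exact le_abs_self _⟩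
    · exact ⟨t \ s, ht.diff hs, by rw [hts_s, hts_t, zero_sub, abs_neg]; exact le_abs_self _⟩

end Restrict

theorem volume_real_Icc_sdiff_Icc (a b : ℝ) {ℓ : ℝ} (hℓ : 0 ≤ ℓ) :
    volume.real (Icc a (a + ℓ) \ Icc b (b + ℓ)) = min ℓ |a - b| := by
  have hoverlap : min (a + ℓ) (b + ℓ) - max a b = ℓ - |a - b| := by
    rw [min_add_add_right, ← max_sub_min_eq_abs']; ring
  rw [eq_sub_of_add_eq (measureReal_sdiff_add_inter measurableSet_Icc measure_Icc_lt_top.ne),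
    Icc_inter_Icc, Real.volume_real_Icc_of_le (by linarith), Real.volume_real_Icc, hoverlap]
  rcases le_total ℓ |a - b| with h | h
  · rw [max_eq_right (by linarith), min_eq_left h, sub_zero]; ring
  · rw [max_eq_left (by linarith), min_eq_right h]; ring

theorem dTV_volume_restrict_Icc_Icc (a b : ℝ) {ℓ : ℝ} (hℓ : 0 ≤ ℓ) :
    dTV (volume.restrict (Icc a (a + ℓ))) (volume.restrict (Icc b (b + ℓ))) = min ℓ |a - b| := by
  rw [dTV_restrict_restrict volume measurableSet_Icc measurableSet_Icc measure_Icc_lt_top.ne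
    measure_Icc_lt_top.ne, volume_real_Icc_sdiff_Icc a b hℓ, volume_real_Icc_sdiff_Icc b a hℓ,
    abs_sub_comm, max_self]

/-- **Geometric repair may not reduce total variation.** For `K > 0` and `λ ∈ [0,1]`,
the geometric repairs at level `λ` of the uniform laws on `[K, K+1]` and
`[−K−1, −K]` toward their midpoint barycenter (uniform on `[−1/2,1/2]`) are the
uniform laws `μ_{0,λ}` on `[K − λ(K+1/2), K − λ(K+1/2)+1]` and `μ_{1,λ}` on
`[−(K+1) + λ(K+1/2), −(K+1) + λ(K+1/2)+1]`, and
`d_TV(μ_{0,λ}, μ_{1,λ}) = min(1, (1−λ)(2K+1))`; in particular the distance is `1`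
whenever `λ ≤ 2K/(2K+1)`. -/
theorem dTV_geometric_repair_uniform
    (K : ℝ) (hK : 0 < K) (lam : ℝ) (hlam : lam ∈ Set.Icc (0 : ℝ) 1)
    (μ0lam μ1lam : Measure ℝ)
    (hμ0 : μ0lam = volume.restrict
      (Set.Icc (K - lam * (K + 1 / 2)) (K - lam * (K + 1 / 2) + 1)))
    (hμ1 : μ1lam = volume.restrict
      (Set.Icc (-(K + 1) + lam * (K + 1 / 2)) (-(K + 1) + lam * (K + 1 / 2) + 1))) :
    dTV μ0lam μ1lam = min 1 ((1 - lam) * (2 * K + 1))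
      ∧ (lam ≤ 2 * K / (2 * K + 1) → dTV μ0lam μ1lam = 1) := by
  have hwidth : 0 < 2 * K + 1 := by linarith
  have hgap : K - lam * (K + 1 / 2) - (-(K + 1) + lam * (K + 1 / 2)) = (1 - lam) * (2 * K + 1) := by
    ring
  have hdist : dTV μ0lam μ1lam = min 1 ((1 - lam) * (2 * K + 1)) := by
    rw [hμ0, hμ1, dTV_volume_restrict_Icc_Icc _ _ zero_le_one, hgap,
      abs_of_nonneg (mul_nonneg (sub_nonneg.2 hlam.2) hwidth.le)]
  refine ⟨hdist, fun hlam_le ↦ ?_⟩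
  have hlam_mul : lam * (2 * K + 1) ≤ 2 * K := (le_div_iff₀ hwidth).1 hlam_le
  rw [hdist, min_eq_left (by linarith)]
end
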